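/- For a quasi-ordered frame (W,R) and n ≥ 1, the Alexandroff space W_R is hereditarily (n+1)-irresolvable if and only if (W,R) has circumference at most n and no strictly ascending chains. -/
import Mathlib


/-- Modal formulas: variables, ⊤, ¬, ∧, □. -/
inductive Fml : Type
  | var : ℕ → Fml
  | top : Fml
  | neg : Fml → Fml
  | and : Fml → Fml → Fml
  | box : Fml → Fml
deriving DecidableEq

namespace Fml
/-- Material implication, defined from ¬ and ∧. -/
def imp (φ ψ : Fml) : Fml := .neg (.and φ (.neg ψ))
/-- Disjunction. -/
def or (φ ψ : Fml) : Fml := .neg (.and (.neg φ) (.neg ψ))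
/-- ◇φ := ¬□¬φ. -/
def dia (φ : Fml) : Fml := .neg (.box (.neg φ))
/-- □*φ := φ ∧ □φ. -/
def boxs (φ : Fml) : Fml := .and φ (.box φ)
/-- ◇*φ := φ ∨ ◇φ. -/
def dias (φ : Fml) : Fml := Fml.or φ (dia φ)
end Fml

/-- Kripke satisfaction. -/
def sat {W : Type} (R : W → W → Prop) (V : ℕ → Set W) : W → Fml → Prop
  | x, .var p => x ∈ V p
  | _, .top => True
  | x, .neg φ => ¬ sat R V x φ
  | x, .and φ ψ => sat R V x φ ∧ sat R V x ψ
  | x, .box φ => ∀ y, R x y → sat R V y φ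

/-- P_n(φ0; φ1,...,φn): P_0(φ0) = ◇φ0, P_n(φ0,φ1,...,φn) = ◇(φ1 ∧ P_{n-1}(φ0,φ2,...,φn)). -/
def Pfml (φ0 : Fml) : List Fml → Fml
  | [] => φ0.dia
  | ψ :: rest => (Fml.and ψ (Pfml φ0 rest)).dia

/-- Conjunction of ¬(φ ∧ ψ) for ψ in the list. -/
def conjNeg (φ : Fml) : List Fml → Fml
  | [] => .top
  | ψ :: rest => .and (.neg (.and φ ψ)) (conjNeg φ rest)

/-- D_n: pairwise disjointness conjunction ⋀_{i<j} ¬(φ_i ∧ φ_j). -/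
def Dfml : List Fml → Fml
  | [] => .top
  | φ :: rest => .and (conjNeg φ rest) (Dfml rest)

/-- The scheme C_n instance on φ0,φ1,...,φn (φs = [φ1,...,φn]). -/
def Cfml (φ0 : Fml) (φs : List Fml) : Fml :=
  ((Dfml (φ0 :: φs)).boxs).imp ((φ0.dia).imp ((Fml.and φ0 (Fml.neg (Pfml φ0 φs))).dia))

/-- The scheme C_n* instance: as C_n but with ◇* in the consequent. -/
def CfmlStar (φ0 : Fml) (φs : List Fml) : Fml :=
  ((Dfml (φ0 :: φs)).boxs).imp ((φ0.dia).imp ((Fml.and φ0 (Fml.neg (Pfml φ0 φs))).dias))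

/-- An ascending R-chain. -/
def AscChain {W : Type} (R : W → W → Prop) (x : ℕ → W) : Prop := ∀ m, R (x m) (x (m+1))

/-- A strictly ascending R-chain. -/
def StrictAscChain {W : Type} (R : W → W → Prop) (x : ℕ → W) : Prop :=
  AscChain R x ∧ ∀ m, ¬ R (x (m+1)) (x m)

/-- The R-cluster of x. -/
def cluster {W : Type} (R : W → W → Prop) (x : W) : Set W := {y | x = y ∨ (R x y ∧ R y x)}

/-- The frame has a cycle of length k (k ≥ 1): k distinct points x_0 R x_1 R ... R x_{k-1} R x_0. -/
def HasCycle {W : Type} (R : W → W → Prop) (k : ℕ) : Prop :=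
  1 ≤ k ∧ ∃ x : ℕ → W, (∀ i j, i < k → j < k → x i = x j → i = j) ∧
    ∀ i < k, R (x i) (x ((i+1) % k))

/-- Circumference at most n: every cycle has length ≤ n. -/
def CircumLE {W : Type} (R : W → W → Prop) (n : ℕ) : Prop := ∀ k, HasCycle R k → k ≤ n

/-- The frame (W,R) validates the scheme C_n. -/
def ValidatesCn {W : Type} (R : W → W → Prop) (n : ℕ) : Prop :=
  ∀ (V : ℕ → Set W) (x : W) (φ0 : Fml) (φs : List Fml), φs.length = n →
    sat R V x (Cfml φ0 φs)

/-- A Boolean valuation on formulas (box-formulas and variables as atoms). -/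
def BoolEval (w : Fml → Bool) : Prop :=
  w .top = true ∧ (∀ φ, w (.neg φ) = !w φ) ∧ (∀ φ ψ, w (.and φ ψ) = (w φ && w ψ))

/-- Propositional tautologies. -/
def Tautology (φ : Fml) : Prop := ∀ w, BoolEval w → w φ = true

/-- Theorems of the smallest normal modal logic containing the axiom set Ax. -/
inductive Prov (Ax : Set Fml) : Fml → Prop
  | taut {φ} : Tautology φ → Prov Ax φ
  | kax (φ ψ) : Prov Ax ((Fml.box (φ.imp ψ)).imp ((Fml.box φ).imp (Fml.box ψ)))
  | ax {φ} : φ ∈ Ax → Prov Ax φ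
  | mp {φ ψ} : Prov Ax (φ.imp ψ) → Prov Ax φ → Prov Ax ψ
  | nec {φ} : Prov Ax φ → Prov Ax (.box φ)

/-- All instances of the transitivity scheme 4. -/
def Ax4 : Set Fml := {χ | ∃ φ, χ = (Fml.box φ).imp (Fml.box (Fml.box φ))}

/-- Axioms of K4C_n: scheme 4 together with all instances of scheme C_n. -/
def AxK4C (n : ℕ) : Set Fml :=
  Ax4 ∪ {χ | ∃ (φ0 : Fml) (φs : List Fml), φs.length = n ∧ χ = Cfml φ0 φs}

/-- X is hereditarily m-irresolvable: no nonempty subspace has m pairwise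
disjoint subsets each dense in the subspace. -/
def HeredIrres (X : Type) [TopologicalSpace X] (m : ℕ) : Prop :=
  ∀ S : Set X, S.Nonempty →
    ¬ ∃ D : Fin m → Set X, (∀ i, D i ⊆ S) ∧ (∀ i j, i ≠ j → Disjoint (D i) (D j)) ∧
      ∀ i, S ⊆ closure (D i)

/-- C-semantics truth sets: □ is interior (hence ◇ is closure). -/
def csat {X : Type} [TopologicalSpace X] (V : ℕ → Set X) : Fml → Set X
  | .var p => V p
  | .top => Set.univ
  | .neg φ => (csat V φ)ᶜ
  | .and φ ψ => csat V φ ∩ csat V ψ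
  | .box φ => interior (csat V φ)

/-- The derived set: set of limit points of Y. -/
def dset {X : Type} [TopologicalSpace X] (Y : Set X) : Set X := {x | x ∈ closure (Y \ {x})}

/-- d-semantics truth sets: ◇ is the derived-set operator. -/
def dsat {X : Type} [TopologicalSpace X] (V : ℕ → Set X) : Fml → Set X
  | .var p => V p
  | .top => Set.univ
  | .neg φ => (dsat V φ)ᶜ
  | .and φ ψ => dsat V φ ∩ dsat V ψ
  | .box φ => (dset ((dsat V φ)ᶜ))ᶜ

/-- The Alexandroff topology of a frame: open sets are the R-up-sets. -/
def alexTop {W : Type} (R : W → W → Prop) : TopologicalSpace W where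
  IsOpen O := ∀ x ∈ O, ∀ y, R x y → y ∈ O
  isOpen_univ := by intro x _ y _; trivial
  isOpen_inter := by intro s t hs ht x hx y hR; exact ⟨hs x hx.1 y hR, ht x hx.2 y hR⟩
  isOpen_sUnion := by
    intro S hS x hx y hR
    obtain ⟨t, htS, hxt⟩ := hx
    exact ⟨t, htS, hS t htS x hxt y hR⟩


section Aux
variable {W : Type} {R : W → W → Prop}

lemma alex_mem_closure (R : W → W → Prop) (hrefl : Reflexive R) (hT : Transitive R)
    (Y : Set W) (z : W) :
    z ∈ @closure W (alexTop R) Y ↔ ∃ y ∈ Y, R z y := by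
  letI : TopologicalSpace W := alexTop R
  constructor
  · intro hz
    by_contra h
    push_neg at h
    have hU : IsOpen {v | ∀ y ∈ Y, ¬ R v y} := by
      intro v hv w hvw y hy hwy
      exact hv y hy (hT hvw hwy)
    rw [mem_closure_iff] at hz
    obtain ⟨y, hyU, hyY⟩ := hz _ hU (fun y hy => h y hy)
    exact hyU y hyY (hrefl y)
  · rintro ⟨y, hyY, hzy⟩
    rw [mem_closure_iff]
    intro U hU hzU
    exact ⟨y, hU z hzU y hzy, hyY⟩

lemma asc_reach (hrefl : Reflexive R) (hT : Transitive R)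
    {x : ℕ → W} (h : AscChain R x) : ∀ m m', m ≤ m' → R (x m) (x m') := by
  intro m m' hle
  induction m', hle using Nat.le_induction with
  | base => exact hrefl _
  | succ k hk ih => exact hT ih (h k)

lemma strict_no_back (hrefl : Reflexive R) (hT : Transitive R)
    {x : ℕ → W} (h : StrictAscChain R x) :
    ∀ m m', m < m' → ¬ R (x m') (x m) := by
  intro m m' hlt hr
  exact h.2 m (hT (asc_reach hrefl hT h.1 (m+1) m' hlt) hr)

lemma strict_inj (hrefl : Reflexive R) (hT : Transitive R)
    {x : ℕ → W} (h : StrictAscChain R x) :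
    Function.Injective x := by
  intro m m' heq
  by_contra hne
  rcases Nat.lt_or_ge m m' with hlt | hge
  · exact strict_no_back hrefl hT h m m' hlt (heq ▸ hrefl (x m))
  · have hlt : m' < m := lt_of_le_of_ne hge (Ne.symm hne)
    exact strict_no_back hrefl hT h m' m hlt (heq ▸ hrefl (x m))

lemma cycle_reach (hrefl : Reflexive R) (hT : Transitive R)
    (k : ℕ) (hk : 1 ≤ k) (x : ℕ → W) (hx : ∀ i < k, R (x i) (x ((i+1) % k))) :
    ∀ d i, i < k → R (x i) (x ((i+d) % k)) := by
  intro d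
  induction d with
  | zero => intro i hi; simpa [Nat.mod_eq_of_lt hi] using hrefl (x i)
  | succ d ih =>
    intro i hi
    have h1 := ih i hi
    have h2 := hx ((i+d) % k) (Nat.mod_lt _ hk)
    rw [Nat.mod_add_mod] at h2
    exact hT h1 (by rwa [show i + d + 1 = i + (d+1) by ring] at h2)

end Aux

/-- for a quasi-order (W,R) and n ≥ 1, the Alexandroff space W_R is
hereditarily (n+1)-irresolvable iff (W,R) has circumference at most n and no
strictly ascending chains. -/
theorem stmt15 {W : Type} (R : W → W → Prop) (hrefl : Reflexive R) (hT : Transitive R)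
    (n : ℕ) (hn : 1 ≤ n) :
    @HeredIrres W (alexTop R) (n+1) ↔
      (CircumLE R n ∧ ¬ ∃ x : ℕ → W, StrictAscChain R x) := by
  letI : TopologicalSpace W := alexTop R
  have hclos : ∀ (Y : Set W) (z : W), z ∈ closure Y ↔ ∃ y ∈ Y, R z y :=
    alex_mem_closure R hrefl hT
  constructor
  · intro hH
    constructor
    · -- circumference at most n
      rintro k ⟨hk1, x, hinj, hstepc⟩
      by_contra hkn
      push_neg at hkn
      apply hH {w | ∃ i < n+1, w = x i} ⟨x 0, 0, Nat.succ_pos n, rfl⟩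
      refine ⟨fun i => {x (i : ℕ)}, ?_, ?_, ?_⟩
      · intro i z hz; exact ⟨(i : ℕ), i.isLt, hz⟩
      · intro i j hij
        rw [Set.disjoint_singleton]
        intro h
        exact hij (Fin.ext (hinj _ _ (lt_of_lt_of_le i.isLt hkn) (lt_of_lt_of_le j.isLt hkn) h))
      · rintro i z ⟨jv, hjv, rfl⟩
        rw [hclos]
        refine ⟨x (i : ℕ), rfl, ?_⟩
        have hreach := cycle_reach hrefl hT k hk1 x hstepc ((i : ℕ) + k - jv) jv
          (lt_of_lt_of_le hjv hkn)
        have heq : jv + ((i : ℕ) + k - jv) = (i : ℕ) + k := by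
          have : jv < k := lt_of_lt_of_le hjv hkn
          omega
        rw [heq, Nat.add_mod_right, Nat.mod_eq_of_lt (lt_of_lt_of_le i.isLt hkn)] at hreach
        exact hreach
    · -- no strictly ascending chain
      rintro ⟨x, hsc⟩
      apply hH (Set.range x) ⟨x 0, 0, rfl⟩
      refine ⟨fun i => x '' {m | m % (n+1) = (i : ℕ)}, ?_, ?_, ?_⟩
      · rintro i z ⟨m, _, rfl⟩; exact ⟨m, rfl⟩
      · intro i j hij
        rw [Set.disjoint_left]
        rintro z ⟨m, hm, rfl⟩ ⟨m', hm', hmm'⟩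
        have : m = m' := strict_inj hrefl hT hsc hmm'.symm
        exact hij (Fin.ext (by rw [← hm, this, hm']))
      · rintro i z ⟨m, rfl⟩
        rw [hclos]
        refine ⟨x ((i : ℕ) + (m+1)*(n+1)), ⟨(i : ℕ) + (m+1)*(n+1), ?_, rfl⟩, ?_⟩
        · simp [Nat.add_mul_mod_self_right, Nat.mod_eq_of_lt i.isLt]
        · apply asc_reach hrefl hT hsc.1
          have h1 : m + 1 ≤ (m+1)*(n+1) := Nat.le_mul_of_pos_right (m+1) (Nat.succ_pos n)
          omega
  · rintro ⟨hcirc, hnochain⟩ S ⟨s0, hs0⟩ ⟨D, hDS, hdisj, hdense⟩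
    have key : ∀ (z : W), ∃ g : Fin (n+1) → W,
        z ∈ S → ∀ i, R z (g i) ∧ g i ∈ D i ∧ g i ∈ S := by
      intro z
      by_cases hz : z ∈ S
      · have hstep : ∀ i : Fin (n+1), ∃ w, R z w ∧ w ∈ D i ∧ w ∈ S := by
          intro i
          obtain ⟨w, hw, hr⟩ := (hclos (D i) z).mp (hdense i hz)
          exact ⟨w, hr, hw, hDS i hw⟩
        choose g hg using hstep
        exact ⟨g, fun _ i => hg i⟩
      · exact ⟨fun _ => z, fun h => absurd h hz⟩
    choose g hg using key
    set y : ℕ → W :=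
      fun m => Nat.rec s0 (fun m z => g z ⟨m % (n+1), Nat.mod_lt m (Nat.succ_pos n)⟩) m with hy
    have hyS : ∀ m, y m ∈ S := by
      intro m; induction m with
      | zero => exact hs0
      | succ m ih => exact (hg (y m) ih _).2.2
    have hstep : ∀ m, R (y m) (y (m+1)) ∧
        y (m+1) ∈ D ⟨m % (n+1), Nat.mod_lt m (Nat.succ_pos n)⟩ := by
      intro m
      have h := hg (y m) (hyS m) ⟨m % (n+1), Nat.mod_lt m (Nat.succ_pos n)⟩
      exact ⟨h.1, h.2.1⟩
    have hasc : AscChain R y := fun m => (hstep m).1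
    have hcl : ∃ m, ∀ k, m ≤ k → R (y k) (y m) := by
      by_contra hno
      push_neg at hno
      choose h hh1 hh2 using hno
      apply hnochain
      refine ⟨fun j => y (h^[j] 0), fun j => ?_, fun j => ?_⟩
      · apply asc_reach hrefl hT hasc
        rw [Function.iterate_succ_apply']
        exact hh1 _
      · show ¬ R (y (h^[j+1] 0)) (y (h^[j] 0))
        rw [Function.iterate_succ_apply']
        exact hh2 _
    obtain ⟨m, hm⟩ := hcl
    have hcluster : ∀ a b, m ≤ a → m ≤ b → R (y a) (y b) :=
      fun a b ha hb => hT (hm a ha) (asc_reach hrefl hT hasc m b hb)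
    have hDmem : ∀ k, y (k+1) ∈ D ⟨k % (n+1), Nat.mod_lt k (Nat.succ_pos n)⟩ :=
      fun k => (hstep k).2
    have hinj : ∀ i j, i < n+1 → j < n+1 → y (m+1+i) = y (m+1+j) → i = j := by
      intro i j hi hj heq
      by_contra hne
      have hfne : (⟨(m+i) % (n+1), Nat.mod_lt _ (Nat.succ_pos n)⟩ : Fin (n+1)) ≠
          ⟨(m+j) % (n+1), Nat.mod_lt _ (Nat.succ_pos n)⟩ := by
        intro hfe
        apply hne
        have hval : (m+i) % (n+1) = (m+j) % (n+1) := Fin.mk.inj_iff.mp hfe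
        have : i % (n+1) = j % (n+1) := Nat.ModEq.add_left_cancel' m hval
        rwa [Nat.mod_eq_of_lt hi, Nat.mod_eq_of_lt hj] at this
      have h1 : y (m+1+i) ∈ D ⟨(m+i) % (n+1), Nat.mod_lt _ (Nat.succ_pos n)⟩ := by
        have := hDmem (m+i); rwa [show m+i+1 = m+1+i by omega] at this
      have h2 : y (m+1+j) ∈ D ⟨(m+j) % (n+1), Nat.mod_lt _ (Nat.succ_pos n)⟩ := by
        have := hDmem (m+j); rwa [show m+j+1 = m+1+j by omega] at this
      exact Set.disjoint_left.mp (hdisj _ _ hfne) h1 (heq ▸ h2)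
    have hcyc : HasCycle R (n+1) := by
      refine ⟨Nat.succ_pos n, fun i => y (m+1+i), hinj, fun i _ => ?_⟩
      exact hcluster _ _ (by omega) (by omega)
    have := hcirc (n+1) hcyc
    omega
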